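/- Let E be a real inner product space and let u, v ∈ E be linearly independent. Then there exist real numbers d, e such that ‖d • u + e • v‖ = 1 and ‖d • v − e • u‖ = 1. -/
import Mathlib

open Real

theorem stmt_9 (E : Type*) [NormedAddCommGroup E] [InnerProductSpace ℝ E]
    (u v : E) (huv : LinearIndependent ℝ ![u, v]) :
    ∃ d e : ℝ, ‖d • u + e • v‖ = 1 ∧ ‖d • v - e • u‖ = 1 := by
  set f : ℝ → ℝ := fun t => ‖Real.cos t • u + Real.sin t • v‖ - ‖Real.cos t • v - Real.sin t • u‖
    with hf
  have hcont : Continuous f := by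
    apply Continuous.sub
    · exact ((Real.continuous_cos.smul continuous_const).add
        (Real.continuous_sin.smul continuous_const)).norm
    · exact ((Real.continuous_cos.smul continuous_const).sub
        (Real.continuous_sin.smul continuous_const)).norm
  have hanti : ∀ t, f (t + π / 2) = - f t := by
    intro t
    simp only [hf, Real.cos_add_pi_div_two, Real.sin_add_pi_div_two]
    have h1 : (-Real.sin t) • u + Real.cos t • v = Real.cos t • v - Real.sin t • u := by
      rw [neg_smul]; abel
    have h2 : ‖(-Real.sin t) • v - Real.cos t • u‖ = ‖Real.cos t • u + Real.sin t • v‖ := by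
      rw [neg_smul, ← norm_neg]
      congr 1
      abel
    rw [h1, h2]; ring
  -- f has a zero in [0, π/2]
  obtain ⟨t, ht0⟩ : ∃ t, f t = 0 := by
    rcases le_or_gt (f 0) 0 with h | h
    · have h2 : 0 ≤ f (π / 2) := by
        have := hanti 0
        simp only [zero_add] at this
        rw [this]; linarith
      obtain ⟨t, _, ht⟩ := intermediate_value_Icc (by positivity : (0:ℝ) ≤ π / 2)
        hcont.continuousOn (Set.mem_Icc.mpr ⟨h, h2⟩)
      exact ⟨t, ht⟩
    · have h2 : f (π / 2) ≤ 0 := by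
        have := hanti 0
        simp only [zero_add] at this
        rw [this]; linarith
      obtain ⟨t, _, ht⟩ := intermediate_value_Icc' (by positivity : (0:ℝ) ≤ π / 2)
        hcont.continuousOn (Set.mem_Icc.mpr ⟨h2, h.le⟩)
      exact ⟨t, ht⟩
  set c := ‖Real.cos t • u + Real.sin t • v‖ with hc
  have heq : ‖Real.cos t • v - Real.sin t • u‖ = c := by
    simp only [hf] at ht0; linarith
  have hcpos : 0 < c := by
    rw [hc, norm_pos_iff]
    intro hzero
    have := (LinearIndependent.pair_iff.mp huv) (Real.cos t) (Real.sin t) hzero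
    have hsc := Real.sin_sq_add_cos_sq t
    rw [this.1, this.2] at hsc
    norm_num at hsc
  refine ⟨Real.cos t / c, Real.sin t / c, ?_, ?_⟩
  · have : (Real.cos t / c) • u + (Real.sin t / c) • v
        = c⁻¹ • (Real.cos t • u + Real.sin t • v) := by
      rw [smul_add, smul_smul, smul_smul]; ring_nf
    rw [this, norm_smul, norm_inv, Real.norm_eq_abs, abs_of_pos hcpos, ← hc,
      inv_mul_cancel₀ hcpos.ne']
  · have : (Real.cos t / c) • v - (Real.sin t / c) • u
        = c⁻¹ • (Real.cos t • v - Real.sin t • u) := by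
      rw [smul_sub, smul_smul, smul_smul]; ring_nf
    rw [this, norm_smul, norm_inv, Real.norm_eq_abs, abs_of_pos hcpos, heq,
      inv_mul_cancel₀ hcpos.ne']
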